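/- Let ψ be a unit vector in ℂ² ⊗ ℂⁿ (i.e., in the bipartite space where the first subsystem is a qubit). Then the partial transpose (|ψ⟩⟨ψ|)^Γ of the rank-one projection onto ψ has largest eigenvalue at least 1/2; equivalently, there exists a unit vector v with ⟨v, (ψψᴴ)^Γ v⟩ ≥ 1/2. -/

import Mathlib

open Matrix
open scoped ComplexOrder

noncomputable def traceNorm {ι : Type*} [Fintype ι] [DecidableEq ι]
    (A : Matrix ι ι ℂ) : ℝ :=
  (((Matrix.posSemidef_conjTranspose_mul_self A).1.eigenvectorUnitary : Matrix ι ι ℂ) *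
    Matrix.diagonal (fun i =>
      ((Real.sqrt ((Matrix.posSemidef_conjTranspose_mul_self A).1.eigenvalues i) : ℝ) : ℂ)) *
    (star ((Matrix.posSemidef_conjTranspose_mul_self A).1.eigenvectorUnitary : Matrix ι ι ℂ))).trace.re

noncomputable def mfun {ι : Type*} [Fintype ι] [DecidableEq ι] (g : ℝ → ℝ)
    (A : Matrix ι ι ℂ) : Matrix ι ι ℂ :=
  if hA : A.IsHermitian then
    (hA.eigenvectorUnitary : Matrix ι ι ℂ) *
      Matrix.diagonal (fun i => (g (hA.eigenvalues i) : ℂ)) *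
      (star hA.eigenvectorUnitary : Matrix ι ι ℂ)
  else 0

noncomputable def divDiff {ι : Type*} (g : ℝ → ℝ) (a : ι → ℝ) : Matrix ι ι ℝ :=
  Matrix.of fun i j =>
    if a i = a j then deriv g (a i) else (g (a i) - g (a j)) / (a i - a j)

noncomputable def Dop {ι : Type*} [Fintype ι] [DecidableEq ι] (g : ℝ → ℝ)
    {A : Matrix ι ι ℂ} (hA : A.IsHermitian) (B : Matrix ι ι ℂ) : Matrix ι ι ℂ :=
  (hA.eigenvectorUnitary : Matrix ι ι ℂ) *
    (((divDiff g hA.eigenvalues).map Complex.ofReal) ⊙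
      ((star hA.eigenvectorUnitary : Matrix ι ι ℂ) * B *
        (hA.eigenvectorUnitary : Matrix ι ι ℂ))) *
    (star hA.eigenvectorUnitary : Matrix ι ι ℂ)

noncomputable def relEnt {ι : Type*} [Fintype ι] [DecidableEq ι]
    (ρ σ : Matrix ι ι ℂ) : ℝ :=
  ((ρ * (mfun Real.log ρ - mfun Real.log σ)).trace).re

def ptrans {m n : Type*} (A : Matrix (m × n) (m × n) ℂ) : Matrix (m × n) (m × n) ℂ :=
  Matrix.of fun p q => A (p.1, q.2) (q.1, p.2)

/-! On a product vector `x ⊗ w` the quadratic form of `(ψψᴴ)^Γ` is `|⟨x ⊗ w̄, ψ⟩|²`: transposing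
the second tensor factor is undone by conjugating `w`. Choose a row `a` of `ψ` carrying at least
half of its weight and take `x = e_a`, `w̄ = ψ(a, ·) / ‖ψ(a, ·)‖`; the form then equals
`‖ψ(a, ·)‖² ≥ 1/2`. -/
section PartialTranspose

variable {m n : Type*} [Fintype m] [Fintype n]

def tensorVec (x : m → ℂ) (w : n → ℂ) : m × n → ℂ := fun p => x p.1 * w p.2

lemma sum_normSq_tensorVec (x : m → ℂ) (w : n → ℂ) :
    ∑ p, Complex.normSq (tensorVec x w p) =
      (∑ i, Complex.normSq (x i)) * ∑ j, Complex.normSq (w j) := by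
  simp [tensorVec, Fintype.sum_prod_type, Finset.sum_mul_sum]

lemma star_tensorVec_single_dotProduct [DecidableEq m] (ψ : m × n → ℂ) (a : m) (w : n → ℂ) :
    star (tensorVec (Pi.single a 1) w) ⬝ᵥ ψ = star w ⬝ᵥ fun j => ψ (a, j) := by
  simp [tensorVec, dotProduct, Fintype.sum_prod_type, Pi.single_apply, apply_ite]

lemma star_tensorVec_dotProduct_ptrans_vecMulVec_mulVec (ψ : m × n → ℂ) (x : m → ℂ) (w : n → ℂ) :
    star (tensorVec x w) ⬝ᵥ (ptrans (vecMulVec ψ (star ψ)) *ᵥ tensorVec x w) =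
      Complex.normSq (star (tensorVec x (star w)) ⬝ᵥ ψ) := by
  rw [Complex.normSq_eq_conj_mul_self, ← Complex.star_def]
  simp only [dotProduct, mulVec, ptrans, vecMulVec, of_apply, tensorVec, Pi.star_apply,
    star_mul', star_star, star_sum, Fintype.sum_prod_type, Finset.mul_sum, Finset.sum_mul]
  refine Finset.sum_congr rfl fun i _ => ?_
  simp_rw [Finset.sum_comm (γ := m) (s := Finset.univ) (t := Finset.univ)]
  rw [Finset.sum_comm]
  exact Finset.sum_congr rfl fun _ _ => Finset.sum_congr rfl fun _ _ =>
    Finset.sum_congr rfl fun _ _ => by ring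

lemma exists_sum_normSq_eq_one_star_dotProduct_eq (u : n → ℂ)
    (hu : 0 < ∑ j, Complex.normSq (u j)) :
    ∃ e : n → ℂ, ∑ j, Complex.normSq (e j) = 1 ∧
      star e ⬝ᵥ u = (√(∑ j, Complex.normSq (u j)) : ℂ) := by
  set r := √(∑ j, Complex.normSq (u j))
  have hr : 0 < r := Real.sqrt_pos.2 hu
  have hr2 : r * r = ∑ j, Complex.normSq (u j) := Real.mul_self_sqrt hu.le
  refine ⟨(r⁻¹ : ℂ) • u, ?_, ?_⟩
  · simp only [Pi.smul_apply, smul_eq_mul, Complex.normSq_mul, ← Finset.mul_sum, ← hr2]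
    rw [← Complex.ofReal_inv, Complex.normSq_ofReal]
    field_simp
  · simp only [dotProduct, Pi.star_apply, Pi.smul_apply, smul_eq_mul, star_mul',
      ← Complex.ofReal_inv, Complex.star_def, Complex.conj_ofReal, mul_assoc, ← Finset.mul_sum,
      mul_comm ((starRingEnd ℂ) _), Complex.mul_conj, ← Complex.ofReal_sum, ← hr2]
    push_cast
    field_simp

end PartialTranspose

theorem ptrans_rankOne_qubit_eigenvalue_ge_half
    {n : ℕ} (ψ : Fin 2 × Fin n → ℂ) (hψ : ∑ p, Complex.normSq (ψ p) = 1) :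
    ∃ v : Fin 2 × Fin n → ℂ, (∑ p, Complex.normSq (v p) = 1) ∧
      (1 / 2 : ℝ) ≤ (dotProduct (star v)
        (ptrans (Matrix.vecMulVec ψ (star ψ)) *ᵥ v)).re := by
  obtain ⟨a, ha⟩ : ∃ a : Fin 2, (1 / 2 : ℝ) ≤ ∑ j, Complex.normSq (ψ (a, j)) := by
    by_contra! h
    rw [Fintype.sum_prod_type, Fin.sum_univ_two] at hψ
    linarith [h 0, h 1]
  obtain ⟨e, he, hψe⟩ :=
    exists_sum_normSq_eq_one_star_dotProduct_eq (fun j => ψ (a, j)) (by linarith)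
  refine ⟨tensorVec (Pi.single a 1) (star e), ?_, ?_⟩
  · simp only [sum_normSq_tensorVec, Pi.single_apply, apply_ite, Complex.normSq_one,
      Complex.normSq_zero, Finset.sum_ite_eq', Finset.mem_univ, if_true, Pi.star_apply,
      Complex.star_def, Complex.normSq_conj, he, one_mul]
  · rw [star_tensorVec_dotProduct_ptrans_vecMulVec_mulVec, star_star, star_tensorVec_single_dotProduct, hψe]
    simpa [Real.mul_self_sqrt (ha.trans' (by norm_num))] using ha
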